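/- Define Z^{Cyl}(m₁, m₂, m₃) = ∏_{i₁=1}^{m₁} ∏_{i₂=1}^{m₂} ∏_{i₃=1}^{m₃} (x² + 4a₁²·sin²((2i₁-1)π/(2m₁)) + 4a₂²·cos²(i₂π/(2m₂+1)) + 4a₃²·cos²(i₃π/(2m₃+1)))^4 and Z^{Möb}(m₁, m₂, m₃) = ∏_{i₁=1}^{m₁} ∏_{i₂=1}^{m₂} ∏_{i₃=1}^{m₃} (x² + 4a₁²·sin²((4i₁-1)π/(4m₁)) + 4a₂²·cos²(i₂π/(2m₂+1)) + 4a₃²·cos²(i₃π/(2m₃+1)))^4. Then for all positive integers n₁, n₂, n₃ and all reals x, a₁, a₂, a₃: Z^{Cyl}(2n₁, n₂, n₃) = (Z^{Möb}(n₁, n₂, n₃))². -/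
import Mathlib


noncomputable def ZCyl (x a₁ a₂ a₃ : ℝ) (m₁ m₂ m₃ : ℕ) : ℝ :=
  ∏ i₁ ∈ Finset.Icc 1 m₁, ∏ i₂ ∈ Finset.Icc 1 m₂, ∏ i₃ ∈ Finset.Icc 1 m₃,
    (x ^ 2 + 4 * a₁ ^ 2 * Real.sin ((2 * i₁ - 1 : ℕ) * Real.pi / (2 * m₁)) ^ 2
      + 4 * a₂ ^ 2 * Real.cos (i₂ * Real.pi / (2 * m₂ + 1)) ^ 2
      + 4 * a₃ ^ 2 * Real.cos (i₃ * Real.pi / (2 * m₃ + 1)) ^ 2) ^ 4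

noncomputable def ZMob (x a₁ a₂ a₃ : ℝ) (m₁ m₂ m₃ : ℕ) : ℝ :=
  ∏ i₁ ∈ Finset.Icc 1 m₁, ∏ i₂ ∈ Finset.Icc 1 m₂, ∏ i₃ ∈ Finset.Icc 1 m₃,
    (x ^ 2 + 4 * a₁ ^ 2 * Real.sin ((4 * i₁ - 1 : ℕ) * Real.pi / (4 * m₁)) ^ 2
      + 4 * a₂ ^ 2 * Real.cos (i₂ * Real.pi / (2 * m₂ + 1)) ^ 2
      + 4 * a₃ ^ 2 * Real.cos (i₃ * Real.pi / (2 * m₃ + 1)) ^ 2) ^ 4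

lemma split_prod (n : ℕ) (g : ℕ → ℝ) :
    ∏ i ∈ Finset.Icc 1 (2*n), g i
      = (∏ j ∈ Finset.Icc 1 n, g (2*j-1)) * ∏ j ∈ Finset.Icc 1 n, g (2*j) := by
  induction n with
  | zero => simp
  | succ n ih =>
    have h1 : 2*(n+1) = (2*n+1)+1 := by ring
    rw [h1, Finset.prod_Icc_succ_top (by omega), Finset.prod_Icc_succ_top (by omega),
        ih, Finset.prod_Icc_succ_top (by omega : 1 ≤ n+1),
        Finset.prod_Icc_succ_top (by omega : 1 ≤ n+1)]
    have h2 : 2*(n+1)-1 = 2*n+1 := by omega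
    rw [h2, h1]; ring

lemma key (n : ℕ) (hn : 0 < n) (f : ℝ → ℝ) :
    ∏ i ∈ Finset.Icc 1 (2*n), f (Real.sin (((2*i-1 : ℕ) : ℝ) * Real.pi / (2 * ((2*n : ℕ) : ℝ))) ^ 2)
      = (∏ i ∈ Finset.Icc 1 n, f (Real.sin (((4*i-1 : ℕ) : ℝ) * Real.pi / (4 * (n : ℝ))) ^ 2)) ^ 2 := by
  rw [split_prod, sq]
  congr 1
  · -- odd part: i₁ = 2j-1, reflect j ↦ n+1-j
    apply Finset.prod_nbij' (fun j => n+1-j) (fun j => n+1-j)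
    · intro a ha; simp only [Finset.mem_Icc] at ha ⊢; omega
    · intro a ha; simp only [Finset.mem_Icc] at ha ⊢; omega
    · intro a ha; simp only [Finset.mem_Icc] at ha; omega
    · intro a ha; simp only [Finset.mem_Icc] at ha; omega
    · intro j hj
      simp only [Finset.mem_Icc] at hj
      have h1 : 2*(2*j-1)-1 = 4*j-3 := by omega
      have h2 : 4*(n+1-j)-1 = 4*n+3-4*j := by omega
      rw [h1, h2]
      congr 2
      have c1 : ((4*j-3 : ℕ) : ℝ) = 4*(j:ℝ)-3 := by
        have : 3 ≤ 4*j := by omega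
        push_cast [this]; ring
      have c2 : ((4*n+3-4*j : ℕ) : ℝ) = 4*(n:ℝ)+3-4*j := by
        have : 4*j ≤ 4*n+3 := by omega
        push_cast [this]; ring
      have hn' : (0:ℝ) < (n:ℝ) := by exact_mod_cast hn
      have e1 : ((4*j-3 : ℕ) : ℝ) * Real.pi / (2 * ((2*n : ℕ) : ℝ))
          = Real.pi - ((4*n+3-4*j : ℕ) : ℝ) * Real.pi / (4 * (n:ℝ)) := by
        rw [c1, c2]
        push_cast
        field_simp
        ring
      rw [e1, Real.sin_pi_sub]
  · -- even part
    apply Finset.prod_congr rfl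
    intro j hj
    simp only [Finset.mem_Icc] at hj
    have h1 : 2*(2*j)-1 = 4*j-1 := by omega
    rw [h1]
    congr 3
    push_cast; ring

theorem cyl_eq_mob_sq (n₁ n₂ n₃ : ℕ) (hn₁ : 0 < n₁) (hn₂ : 0 < n₂) (hn₃ : 0 < n₃)
    (x a₁ a₂ a₃ : ℝ) :
    ZCyl x a₁ a₂ a₃ (2 * n₁) n₂ n₃ = (ZMob x a₁ a₂ a₃ n₁ n₂ n₃) ^ 2 := by
  unfold ZCyl ZMob
  exact key n₁ hn₁ (fun t => ∏ i₂ ∈ Finset.Icc 1 n₂, ∏ i₃ ∈ Finset.Icc 1 n₃,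
    (x ^ 2 + 4 * a₁ ^ 2 * t
      + 4 * a₂ ^ 2 * Real.cos (i₂ * Real.pi / (2 * n₂ + 1)) ^ 2
      + 4 * a₃ ^ 2 * Real.cos (i₃ * Real.pi / (2 * n₃ + 1)) ^ 2) ^ 4)
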